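/- arXiv:2503.05416 — 3 statements merged into one kernel-verified Lean document; each statement's English description precedes it below -/
import Mathlib

section
/- Let p be a prime, let D = G₁ × ⋯ × G_t be a finite p-group, and let G be a subdirect product of D. For each i, let d_i be an upper bound for d_{G_i}(N_i) over all normal subgroups N_i of G_i. Then the minimal number of generators of G satisfies d(G) ≤ d₁ + ⋯ + d_t. -/
open Subgroup
open scoped commutatorElement


/-- `d_G(N)`: the minimal size of a subset of `N` whose normal closure in `G` is `N`. -/
noncomputable def dGen {G : Type*} [Group G] (N : Subgroup G) : ℕ :=
  sInf {k : ℕ | ∃ S : Finset G, (↑S : Set G) ⊆ (N : Set G) ∧ S.card = k ∧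
    Subgroup.normalClosure (↑S : Set G) = N}

/-- `d(G)`: the minimal number of generators of `G`. -/
noncomputable def minGen (G : Type*) [Group G] : ℕ :=
  sInf {k : ℕ | ∃ S : Finset G, S.card = k ∧ Subgroup.closure (↑S : Set G) = ⊤}

variable {p : ℕ}

/-- A finite product of `p`-groups is a `p`-group. -/
lemma isPGroup_pi {ι : Type*} [Fintype ι] {G : ι → Type*} [∀ i, Group (G i)]
    (h : ∀ i, IsPGroup p (G i)) : IsPGroup p (∀ i, G i) := by
  intro g
  choose k hk using fun i => h i (g i)
  refine ⟨Finset.univ.sup k, ?_⟩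
  funext i
  have hdvd : orderOf (g i) ∣ p ^ Finset.univ.sup k :=
    dvd_trans (orderOf_dvd_of_pow_eq_one (hk i))
      (pow_dvd_pow p (Finset.le_sup (Finset.mem_univ i)))
  have := orderOf_dvd_iff_pow_eq_one.mp hdvd
  simpa using this

/-- In a finite `p`-group, the commutator subgroup is contained in the Frattini subgroup. -/
lemma commutator_le_frattini' {H : Type*} [Group H] [Finite H] (hp : p.Prime)
    (h : IsPGroup p H) : commutator H ≤ frattini H := by
  haveI : Fact p.Prime := ⟨hp⟩
  haveI : Group.IsNilpotent H := h.isNilpotent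
  rw [frattini, Order.radical]
  refine le_iInf₂ fun K hK => ?_
  haveI : K.Normal := NormalizerCondition.normal_of_coatom K normalizerCondition_of_isNilpotent hK
  obtain ⟨g, hg⟩ : ∃ g, g ∉ K := by
    by_contra hcon
    push_neg at hcon
    exact hK.1 ((Subgroup.eq_top_iff' K).mpr hcon)
  have hlt : K < K ⊔ Subgroup.zpowers g :=
    lt_of_le_of_ne le_sup_left (fun he => hg (by rw [he]; exact Subgroup.mem_sup_right (mem_zpowers g)))
  have htop : K ⊔ Subgroup.zpowers g = ⊤ := hK.2 _ hlt
  set π := QuotientGroup.mk' K with hπ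
  have hz : Subgroup.zpowers (π g) = ⊤ := by
    have h1 : Subgroup.map π (K ⊔ Subgroup.zpowers g) = ⊤ := by
      rw [htop]; exact Subgroup.map_top_of_surjective _ (QuotientGroup.mk'_surjective K)
    have hbot : Subgroup.map π K = ⊥ := by
      rw [eq_bot_iff]
      rintro x ⟨y, hy, rfl⟩
      rw [Subgroup.mem_bot]
      exact (QuotientGroup.eq_one_iff y).mpr hy
    rwa [Subgroup.map_sup, hbot, bot_sup_eq, MonoidHom.map_zpowers] at h1
  have hcomm : ∀ a b : H ⧸ K, a * b = b * a := by
    intro a b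
    obtain ⟨m, hm⟩ := Subgroup.mem_zpowers_iff.mp (hz ▸ Subgroup.mem_top a)
    obtain ⟨n, hn⟩ := Subgroup.mem_zpowers_iff.mp (hz ▸ Subgroup.mem_top b)
    rw [← hm, ← hn, ← zpow_add, ← zpow_add, add_comm]
  rw [_root_.commutator_def, Subgroup.commutator_le]
  intro a _ b _
  have h2 : π ⁅a, b⁆ = 1 := by
    rw [map_commutatorElement]
    exact commutatorElement_eq_one_iff_mul_comm.mpr (hcomm _ _)
  exact (QuotientGroup.eq_one_iff _).mp h2

/-- In a finite `p`-group, a set whose normal closure is everything generates. -/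
lemma closure_eq_top_of_normalClosure {H : Type*} [Group H] [Finite H] (hp : p.Prime)
    (h : IsPGroup p H) {S : Set H} (hS : Subgroup.normalClosure S = ⊤) : Subgroup.closure S = ⊤ := by
  have hnorm : (Subgroup.closure S ⊔ commutator H).Normal := by
    constructor
    intro x hx g
    have h1 : ⁅g, x⁆ ∈ Subgroup.closure S ⊔ commutator H :=
      Subgroup.mem_sup_right (by
        rw [_root_.commutator_def]
        exact commutator_mem_commutator (mem_top g) (mem_top x))
    have h2 : g * x * g⁻¹ = ⁅g, x⁆ * x := by group
    rw [h2]
    exact mul_mem h1 hx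
  have h3 : Subgroup.closure S ⊔ commutator H = ⊤ := by
    rw [eq_top_iff, ← hS]
    exact normalClosure_le_normal (subset_closure.trans (by
      exact fun x hx => Subgroup.mem_sup_left hx))
  haveI : Finite (Subgroup H) := Finite.of_injective _ SetLike.coe_injective
  apply frattini_nongenerating
  rw [eq_top_iff, ← h3]
  exact sup_le_sup_left (commutator_le_frattini' hp h) _

/-- Extension bound: generators of kernel (as normal closure) plus lifts of
generators of the quotient generate a finite `p`-group. -/
lemma minGen_le_extension {H Q : Type*} [Group H] [Group Q] [Finite H] (hp : p.Prime)
    (hH : IsPGroup p H) (f : H →* Q) (hf : Function.Surjective f)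
    (S : Finset H) (hS : Subgroup.normalClosure (↑S : Set H) = f.ker)
    (T : Finset Q) (hT : Subgroup.closure (↑T : Set Q) = ⊤) :
    minGen H ≤ S.card + T.card := by
  classical
  set σ := Function.surjInv hf with hσ
  set U : Finset H := S ∪ T.image σ with hU
  have hcard : U.card ≤ S.card + T.card :=
    le_trans (Finset.card_union_le _ _) (by gcongr; exact Finset.card_image_le)
  have hncl : Subgroup.normalClosure (↑U : Set H) = ⊤ := by
    have hker : f.ker ≤ Subgroup.normalClosure (↑U : Set H) := by
      rw [← hS]
      refine Subgroup.normalClosure_mono ?_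
      intro x hx
      simp only [hU, Finset.coe_union]
      exact Set.mem_union_left _ hx
    have hmap : Subgroup.map f (Subgroup.normalClosure (↑U : Set H)) = ⊤ := by
      rw [eq_top_iff, ← hT, Subgroup.closure_le]
      intro q hq
      refine ⟨σ q, Subgroup.subset_normalClosure ?_, Function.surjInv_eq hf q⟩
      simp only [hU, Finset.coe_union, Finset.coe_image]
      exact Set.mem_union_right _ ⟨q, hq, rfl⟩
    have h2 : Subgroup.normalClosure (↑U : Set H) ⊔ f.ker = ⊤ := by
      rw [← Subgroup.comap_map_eq, hmap, Subgroup.comap_top]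
    rwa [sup_eq_left.mpr hker] at h2
  have hclos := closure_eq_top_of_normalClosure hp hH hncl
  exact le_trans (Nat.sInf_le ⟨U, rfl, hclos⟩) hcard

/-- Every finite group has a generating set realizing `minGen`. -/
lemma minGen_spec (K : Type*) [Group K] [Finite K] :
    ∃ T : Finset K, T.card = minGen K ∧ Subgroup.closure (↑T : Set K) = ⊤ := by
  classical
  haveI := Fintype.ofFinite K
  have hne : {k : ℕ | ∃ S : Finset K, S.card = k ∧ Subgroup.closure (↑S : Set K) = ⊤}.Nonempty :=
    ⟨Finset.univ.card, Finset.univ, rfl, by simp⟩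
  obtain ⟨T, hT1, hT2⟩ := Nat.sInf_mem hne
  exact ⟨T, hT1, hT2⟩

/-- Every normal subgroup of a finite group has a normal generating set realizing `dGen`. -/
lemma dGen_spec {K : Type*} [Group K] [Finite K] (N : Subgroup K) (hN : N.Normal) :
    ∃ S : Finset K, (↑S : Set K) ⊆ (N : Set K) ∧ S.card = dGen N ∧
      Subgroup.normalClosure (↑S : Set K) = N := by
  classical
  haveI := Fintype.ofFinite K
  have hne : {k : ℕ | ∃ S : Finset K, (↑S : Set K) ⊆ (N : Set K) ∧ S.card = k ∧
      Subgroup.normalClosure (↑S : Set K) = N}.Nonempty := by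
    refine ⟨(N : Set K).toFinset.card, (N : Set K).toFinset, by simp, rfl, ?_⟩
    rw [Set.coe_toFinset]
    exact Subgroup.normalClosure_eq_self N
  obtain ⟨S, h1, h2, h3⟩ := Nat.sInf_mem hne
  exact ⟨S, h1, h2, h3⟩

lemma conj_mulSingle_last {t : ℕ} {G : Fin (t + 1) → Type} [∀ i, Group (G i)]
    (h : ∀ i, G i) (y : G (Fin.last t)) :
    h * Pi.mulSingle (Fin.last t) y * h⁻¹ =
      Pi.mulSingle (Fin.last t) (h (Fin.last t) * y * (h (Fin.last t))⁻¹) := by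
  funext j
  rcases eq_or_ne j (Fin.last t) with rfl | hj
  · simp
  · simp [Pi.mulSingle_eq_of_ne hj]

lemma subdirect_aux (p : ℕ) (hp : p.Prime) (t : ℕ)
    (G : Fin t → Type) [instG : ∀ i, Group (G i)] [instF : ∀ i, Finite (G i)]
    (hpG : ∀ i, IsPGroup p (G i))
    (H : Subgroup (∀ i, G i))
    (hsub : ∀ i, Function.Surjective fun h : ↥H => ((h : ∀ j, G j) i))
    (d : Fin t → ℕ)
    (hd : ∀ (i : Fin t) (N : Subgroup (G i)), N.Normal → dGen N ≤ d i) :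
    minGen ↥H ≤ ∑ i, d i := by
  classical
  induction t with
  | zero =>
    have h0 : minGen ↥H ≤ 0 := by
      refine Nat.sInf_le ⟨∅, Finset.card_empty, ?_⟩
      rw [eq_top_iff]
      intro x _
      have : x = 1 := Subsingleton.elim x 1
      rw [this]; exact one_mem _
    simpa using h0
  | succ t ih =>
    -- the projection onto the first `t` coordinates
    set π : (∀ i : Fin (t + 1), G i) →* (∀ i : Fin t, G i.castSucc) :=
      { toFun := fun g i => g i.castSucc
        map_one' := rfl
        map_mul' := fun _ _ => rfl } with hπdef
    set H' : Subgroup (∀ i : Fin t, G i.castSucc) := H.map π with hH'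
    set f : ↥H →* ↥H' := π.subgroupMap H with hf
    have hfsurj : Function.Surjective f := π.subgroupMap_surjective H
    -- the quotient H' is a subdirect product of the first t factors
    have hsub' : ∀ i, Function.Surjective fun h : ↥H' => ((h : ∀ j : Fin t, G j.castSucc) i) := by
      intro i g
      obtain ⟨h, hh⟩ := hsub i.castSucc g
      exact ⟨f h, hh⟩
    have hIH := ih (fun i => G i.castSucc) (fun i => hpG i.castSucc) H' hsub'
      (fun i => d i.castSucc) (fun i N hN => hd i.castSucc N hN)
    obtain ⟨T, hTcard, hTtop⟩ := minGen_spec ↥H'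
    -- the kernel of f corresponds to a normal subgroup of the last factor
    set e : G (Fin.last t) →* (∀ i, G i) := MonoidHom.mulSingle G (Fin.last t) with he
    set N : Subgroup (G (Fin.last t)) := H.comap e with hN
    have hNnormal : N.Normal := by
      constructor
      intro n hn g
      obtain ⟨h, hh⟩ := hsub (Fin.last t) g
      have hh' : (↑h : ∀ j, G j) (Fin.last t) = g := hh
      have hmem : (↑h : ∀ i, G i) * e n * (↑h : ∀ i, G i)⁻¹ ∈ H :=
        H.mul_mem (H.mul_mem h.2 hn) (H.inv_mem h.2)
      rwa [show (e n : ∀ i, G i) = Pi.mulSingle (Fin.last t) n from rfl,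
        conj_mulSingle_last, hh'] at hmem
    obtain ⟨Y, hYsub, hYcard, hYncl⟩ := dGen_spec N hNnormal
    have hYd : Y.card ≤ d (Fin.last t) := hYcard ▸ hd (Fin.last t) N hNnormal
    -- the finite set S inside H corresponding to Y
    have hYH : ∀ y ∈ Y, e y ∈ H := fun y hy => hYsub hy
    set S : Finset ↥H := Y.attach.image (fun y => (⟨e y.1, hYH y.1 y.2⟩ : ↥H)) with hS
    have hScard : S.card ≤ d (Fin.last t) :=
      le_trans (le_trans Finset.card_image_le (by rw [Finset.card_attach])) hYd
    -- membership in the kernel of f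
    have hker_iff : ∀ x : ↥H, x ∈ f.ker ↔ ∀ i : Fin t, (↑x : ∀ j, G j) i.castSucc = 1 := by
      intro x
      rw [MonoidHom.mem_ker]
      constructor
      · intro hx i
        have : (↑(f x) : ∀ j : Fin t, G j.castSucc) i = 1 := by rw [hx]; rfl
        exact this
      · intro hx
        ext i
        exact hx i
    -- normal closure of S is the kernel of f
    have hSker : Subgroup.normalClosure (↑S : Set ↥H) = f.ker := by
      apply le_antisymm
      · refine Subgroup.normalClosure_le_normal ?_
        intro x hx
        simp only [hS, Finset.coe_image, Set.mem_image] at hx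
        obtain ⟨y, _, rfl⟩ := hx
        rw [SetLike.mem_coe, hker_iff]
        intro i
        exact Pi.mulSingle_eq_of_ne (Fin.castSucc_lt_last i).ne y.1
      · intro x hx
        rw [hker_iff] at hx
        have hxval : (↑x : ∀ j, G j) = e ((↑x : ∀ j, G j) (Fin.last t)) := by
          funext j
          induction j using Fin.lastCases with
          | last => simp [he, MonoidHom.mulSingle_apply]
          | cast i => rw [hx i]; exact (Pi.mulSingle_eq_of_ne (Fin.castSucc_lt_last i).ne _).symm
        have hxN : (↑x : ∀ j, G j) (Fin.last t) ∈ N := by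
          rw [hN, Subgroup.mem_comap, ← hxval]
          exact x.2
        -- the subgroup of elements of the last factor landing in the normal closure
        set M : Subgroup (G (Fin.last t)) :=
          Subgroup.comap e (Subgroup.map H.subtype (Subgroup.normalClosure (↑S : Set ↥H)))
          with hM
        have hMnormal : M.Normal := by
          constructor
          intro n hn g
          rw [hM, Subgroup.mem_comap] at hn ⊢
          obtain ⟨z, hz, hzval⟩ := hn
          obtain ⟨h, hh⟩ := hsub (Fin.last t) g
          have hh' : (↑h : ∀ j, G j) (Fin.last t) = g := hh
          refine ⟨h * z * h⁻¹, (Subgroup.normalClosure_normal).conj_mem z hz h, ?_⟩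
          have hz' : (↑z : ∀ j, G j) = e n := hzval
          show ((h * z * h⁻¹ : ↥H) : ∀ j, G j) = e (g * n * g⁻¹)
          rw [Subgroup.coe_mul, Subgroup.coe_mul, Subgroup.coe_inv, hz',
            show (e n : ∀ j, G j) = Pi.mulSingle (Fin.last t) n from rfl,
            conj_mulSingle_last, hh']
          rfl
        have hNM : N ≤ M := by
          rw [← hYncl]
          refine Subgroup.normalClosure_le_normal ?_
          intro y hy
          rw [SetLike.mem_coe, hM, Subgroup.mem_comap]
          refine ⟨⟨e y, hYH y hy⟩, Subgroup.subset_normalClosure ?_, rfl⟩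
          simp only [hS, Finset.coe_image, Set.mem_image]
          exact ⟨⟨y, hy⟩, by simp, rfl⟩
        obtain ⟨z, hz, hzval⟩ := hNM hxN
        have hz' : (↑z : ∀ j, G j) = e ((↑x : ∀ j, G j) (Fin.last t)) := hzval
        have : z = x := Subtype.ext (hz'.trans hxval.symm)
        rwa [← this]
    -- apply the extension lemma
    have hfin : Finite (∀ i, G i) := Pi.finite
    have hpH : IsPGroup p ↥H := (isPGroup_pi hpG).to_subgroup H
    have hmain := minGen_le_extension hp hpH f hfsurj S hSker T hTtop
    have h1 : T.card ≤ ∑ i : Fin t, d i.castSucc := by rw [hTcard]; simpa using hIH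
    calc minGen ↥H ≤ S.card + T.card := hmain
      _ ≤ d (Fin.last t) + ∑ i : Fin t, d i.castSucc := add_le_add hScard h1
      _ = ∑ i, d i := by rw [Fin.sum_univ_castSucc]; omega

/-- **Lemma (generating subdirect products of `p`-groups).** Let `G` be a subdirect
product of the finite `p`-group `D = G₁ × ⋯ × G_t`, and let `dᵢ` be an upper bound for
`d_{G_i}(N_i)` over all normal subgroups `Nᵢ ⊴ Gᵢ`.  Then `d(G) ≤ d₁ + ⋯ + d_t`. -/
theorem generation_of_subdirect_product (p : ℕ) (hp : p.Prime) (t : ℕ)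
    (G : Fin t → Type) [∀ i, Group (G i)] [∀ i, Finite (G i)]
    (hpG : ∀ i, IsPGroup p (G i))
    (H : Subgroup (∀ i, G i))
    (hsub : ∀ i, Function.Surjective fun h : ↥H => ((h : ∀ j, G j) i))
    (d : Fin t → ℕ)
    (hd : ∀ (i : Fin t) (N : Subgroup (G i)), N.Normal → dGen N ≤ d i) :
    minGen ↥H ≤ ∑ i, d i :=
  subdirect_aux p hp t G hpG H hsub d hd
end

section
/- Let p be a prime, let G be a finite p-group, let L be a normal subgroup of G, and let d be an upper bound on d_G(H) over all normal subgroups H of G contained in L. Then for every integer k ≥ 1, the number of normal subgroups H of G with H ≤ L and index |L : H| ≤ k is at most k^d. -/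
namespace CountNormalAux

open Subgroup
open scoped commutatorElement

variable {G : Type*} [Group G]

/-- The subgroup generated by `p`-th powers of elements of `L`. -/
def pPow (p : ℕ) (L : Subgroup G) : Subgroup G :=
  Subgroup.closure {x : G | ∃ y ∈ L, y ^ p = x}

lemma pPow_le (p : ℕ) (L : Subgroup G) : pPow p L ≤ L := by
  rw [pPow, Subgroup.closure_le]
  rintro x ⟨y, hy, rfl⟩
  exact L.pow_mem hy p

lemma mem_pPow {p : ℕ} {L : Subgroup G} {y : G} (hy : y ∈ L) : y ^ p ∈ pPow p L :=
  Subgroup.subset_closure ⟨y, hy, rfl⟩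

lemma pPow_normal (p : ℕ) (L : Subgroup G) (hL : L.Normal) : (pPow p L).Normal := by
  have hsub : Group.conjugatesOfSet {x : G | ∃ y ∈ L, y ^ p = x}
      ⊆ {x : G | ∃ y ∈ L, y ^ p = x} := by
    intro x hx
    obtain ⟨a, ⟨y, hy, rfl⟩, hconj⟩ := Group.mem_conjugatesOfSet_iff.mp hx
    obtain ⟨c, rfl⟩ := isConj_iff.mp hconj
    exact ⟨c * y * c⁻¹, hL.conj_mem y hy c, by rw [conj_pow]⟩
  have h : Subgroup.normalClosure {x : G | ∃ y ∈ L, y ^ p = x} = pPow p L := by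
    refine le_antisymm ?_ Subgroup.closure_le_normalClosure
    unfold Subgroup.normalClosure
    exact Subgroup.closure_mono hsub
  rw [show pPow p L = Subgroup.normalClosure {x : G | ∃ y ∈ L, y ^ p = x} from h.symm]
  infer_instance

lemma commutator_sup_top_le {A B C : Subgroup G} (hC : C.Normal)
    (hA : ⁅A, (⊤ : Subgroup G)⁆ ≤ C) (hB : ⁅B, (⊤ : Subgroup G)⁆ ≤ C) :
    ⁅A ⊔ B, (⊤ : Subgroup G)⁆ ≤ C := by
  let D : Subgroup G :=
    { carrier := {x : G | ∀ g : G, ⁅x, g⁆ ∈ C}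
      one_mem' := by intro g; simpa using C.one_mem
      mul_mem' := by
        intro a b ha hb g
        have h1 : ⁅a * b, g⁆ = a * ⁅b, g⁆ * a⁻¹ * ⁅a, g⁆ := by group
        rw [h1]
        exact C.mul_mem (hC.conj_mem _ (hb g) a) (ha g)
      inv_mem' := by
        intro a ha g
        have h1 : ⁅a⁻¹, g⁆ = a⁻¹ * ⁅a, g⁆⁻¹ * (a⁻¹)⁻¹ := by group
        rw [h1]
        exact hC.conj_mem _ (C.inv_mem (ha g)) a⁻¹ }
  have hAD : A ≤ D := by
    intro a ha g
    exact hA (Subgroup.commutator_mem_commutator ha (Subgroup.mem_top g))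
  have hBD : B ≤ D := by
    intro b hb g
    exact hB (Subgroup.commutator_mem_commutator hb (Subgroup.mem_top g))
  rw [Subgroup.commutator_le]
  intro x hx g _
  exact (sup_le hAD hBD) hx g

lemma sup_commutator_self (hnil : Group.IsNilpotent G) {M L : Subgroup G}
    (hM : M.Normal) (h : M ⊔ ⁅L, (⊤ : Subgroup G)⁆ = L) : M = L := by
  haveI := hM
  have hstep : ∀ i, L ≤ M ⊔ (⊤ : Subgroup G).lowerCentralSeries i := by
    intro i
    induction i with
    | zero => rw [Subgroup.lowerCentralSeries_zero]; simp
    | succ i ih =>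
      conv_lhs => rw [← h]
      refine sup_le le_sup_left ?_
      have h1 : ⁅L, (⊤ : Subgroup G)⁆ ≤ ⁅M ⊔ (⊤ : Subgroup G).lowerCentralSeries i, (⊤ : Subgroup G)⁆ :=
        Subgroup.commutator_mono ih le_rfl
      refine h1.trans ?_
      have h2 : ⁅M ⊔ (⊤ : Subgroup G).lowerCentralSeries i, (⊤ : Subgroup G)⁆ ≤
          ⁅M, (⊤ : Subgroup G)⁆ ⊔ ⁅(⊤ : Subgroup G).lowerCentralSeries i, (⊤ : Subgroup G)⁆ :=
        commutator_sup_top_le inferInstance le_sup_left le_sup_right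
      refine h2.trans (sup_le ?_ ?_)
      · exact (Subgroup.commutator_le_left M ⊤).trans le_sup_left
      · have hlcs : (⊤ : Subgroup G).lowerCentralSeries (i + 1) = ⁅(⊤ : Subgroup G).lowerCentralSeries i, (⊤ : Subgroup G)⁆ := rfl
        rw [← hlcs]
        exact le_sup_right
  obtain ⟨n, hn⟩ := _root_.nilpotent_iff_lowerCentralSeries.mp hnil
  have hML : M ≤ L := le_sup_left.trans h.le
  have := hstep n
  rw [hn, sup_bot_eq] at this
  exact le_antisymm hML this

lemma eq_one_of_pow_closure {p : ℕ} (hp : p.Prime) {A : Type*} [CommGroup A] [Finite A]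
    (hpA : IsPGroup p A) (hcl : Subgroup.closure {x : A | ∃ y : A, y ^ p = x} = ⊤) :
    ∀ a : A, a = 1 := by
  have hrange : {x : A | ∃ y : A, y ^ p = x} = Set.range (powMonoidHom p : A →* A) := by
    ext x
    simp [powMonoidHom]
  have hsurj : Function.Surjective (powMonoidHom p : A →* A) := by
    rw [← MonoidHom.range_eq_top]
    rw [hrange, ← MonoidHom.coe_range, Subgroup.closure_eq] at hcl
    exact hcl
  have hinj : Function.Injective (powMonoidHom p : A →* A) :=
    Finite.injective_iff_surjective.mpr hsurj
  have key : ∀ k, ∀ a : A, a ^ p ^ k = 1 → a = 1 := by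
    intro k
    induction k with
    | zero => intro a ha; simpa using ha
    | succ k ih =>
      intro a ha
      refine ih a (hinj ?_)
      show (a ^ p ^ k) ^ p = (1 : A) ^ p
      rw [← pow_mul, ← pow_succ, ha, one_pow]
  intro a
  obtain ⟨k, hk⟩ := hpA a
  exact key k a hk

lemma commutator_top_le_self {L : Subgroup G} (hL : L.Normal) :
    ⁅L, (⊤ : Subgroup G)⁆ ≤ L := by
  haveI := hL
  exact Subgroup.commutator_le_left L ⊤

lemma normal_of_commutator_le {M L : Subgroup G} (hML : M ≤ L)
    (h : ⁅L, (⊤ : Subgroup G)⁆ ≤ M) : M.Normal := by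
  have h' : ⁅(⊤ : Subgroup G), L⁆ ≤ M := by rwa [Subgroup.commutator_comm]
  constructor
  intro m hm g
  have h1 : g * m * g⁻¹ = ⁅g, m⁆ * m := by group
  rw [h1]
  exact M.mul_mem (h' (Subgroup.commutator_mem_commutator (Subgroup.mem_top g) (hML hm))) hm

lemma frattini_step {p : ℕ} (hp : p.Prime) [Finite G] (hpG : IsPGroup p G)
    {H L : Subgroup G} (hH : H.Normal) (hL : L.Normal) (hHL : H ≤ L)
    (heq : H ⊔ (⁅L, (⊤ : Subgroup G)⁆ ⊔ pPow p L) = L) : H = L := by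
  haveI : Fact p.Prime := ⟨hp⟩
  haveI := hH; haveI := hL
  haveI : Group.IsNilpotent G := hpG.isNilpotent
  haveI hCmn : (⁅L, (⊤ : Subgroup G)⁆).Normal := inferInstance
  set D := H ⊔ ⁅L, (⊤ : Subgroup G)⁆ with hD
  haveI hDn : D.Normal := Subgroup.sup_normal H ⁅L, (⊤ : Subgroup G)⁆
  have hCmD : ⁅L, (⊤ : Subgroup G)⁆ ≤ D := le_sup_right
  have hHD : H ≤ D := le_sup_left
  -- Step A : L ≤ D
  have hLD : L ≤ D := by
    set f := QuotientGroup.mk' D with hf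
    have hkerf : f.ker = D := QuotientGroup.ker_mk' D
    set L' := L.map f with hL'
    have hcomm : ∀ a b : L', (a : G ⧸ D) * b = (b : G ⧸ D) * a := by
      rintro ⟨a, ha⟩ ⟨b, hb⟩
      obtain ⟨x, hx, rfl⟩ := ha
      obtain ⟨y, hy, rfl⟩ := hb
      show f x * f y = f y * f x
      rw [← map_mul, ← map_mul]
      refine (QuotientGroup.mk'_eq_mk' D).mpr ⟨⁅y⁻¹, x⁻¹⁆, ?_, by group⟩
      exact hCmD (Subgroup.commutator_mem_commutator (L.inv_mem hy) (Subgroup.mem_top _))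
    letI : CommGroup L' :=
      { (inferInstance : Group L') with
        mul_comm := fun a b => Subtype.ext (hcomm a b) }
    have hpL' : IsPGroup p L' := (hpG.to_quotient D).to_subgroup L'
    -- closure of p-th powers of L' is L'
    have hBig : Subgroup.closure {x : G ⧸ D | ∃ y ∈ L', y ^ p = x} = L' := by
      apply le_antisymm
      · rw [Subgroup.closure_le]
        rintro x ⟨y, hy, rfl⟩
        exact L'.pow_mem hy p
      · have hexp : L' = Subgroup.map f H ⊔ (Subgroup.map f ⁅L, (⊤ : Subgroup G)⁆ ⊔
            Subgroup.map f (pPow p L)) := by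
          rw [← Subgroup.map_sup, ← Subgroup.map_sup, heq]
        have h1 : Subgroup.map f H = ⊥ := by
          rw [eq_bot_iff]
          rintro x ⟨h, hh, rfl⟩
          have : h ∈ f.ker := by rw [hkerf]; exact hHD hh
          simpa [Subgroup.mem_bot] using this
        have h2 : Subgroup.map f ⁅L, (⊤ : Subgroup G)⁆ = ⊥ := by
          rw [eq_bot_iff]
          rintro x ⟨h, hh, rfl⟩
          have : h ∈ f.ker := by rw [hkerf]; exact hCmD hh
          simpa [Subgroup.mem_bot] using this
        have h3 : Subgroup.map f (pPow p L) ≤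
            Subgroup.closure {x : G ⧸ D | ∃ y ∈ L', y ^ p = x} := by
          rw [pPow, MonoidHom.map_closure]
          apply Subgroup.closure_mono
          rintro x ⟨w, ⟨y, hy, rfl⟩, rfl⟩
          exact ⟨f y, ⟨y, hy, rfl⟩, by rw [map_pow]⟩
        have hL'eq : L' = Subgroup.map f (pPow p L) := by
          rw [hexp, h1, h2, bot_sup_eq, bot_sup_eq]
        exact hL'eq.le.trans h3
    have hclA : Subgroup.closure {x : L' | ∃ y : L', y ^ p = x} = ⊤ := by
      apply Subgroup.map_injective (Subgroup.subtype_injective L')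
      rw [MonoidHom.map_closure]
      have himg : (L'.subtype '' {x : L' | ∃ y : L', y ^ p = x}) =
          {x : G ⧸ D | ∃ y ∈ L', y ^ p = x} := by
        ext x
        constructor
        · rintro ⟨a, ⟨y, rfl⟩, rfl⟩
          exact ⟨(y : G ⧸ D), y.2, rfl⟩
        · rintro ⟨y, hy, rfl⟩
          exact ⟨(⟨y, hy⟩ : L') ^ p, ⟨⟨y, hy⟩, rfl⟩, rfl⟩
      rw [himg, hBig, ← MonoidHom.range_eq_map, Subgroup.subtype_range]
    have htriv := eq_one_of_pow_closure hp hpL' hclA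
    intro x hx
    have hfx : f x ∈ L' := ⟨x, hx, rfl⟩
    have : f x = 1 := congrArg Subtype.val (htriv ⟨f x, hfx⟩)
    rw [← hkerf]
    exact this
  -- Step B
  have hDL : D = L := le_antisymm (sup_le hHL (commutator_top_le_self hL)) hLD
  exact sup_commutator_self ‹Group.IsNilpotent G› hH hDL

lemma exists_relIndex_p {p : ℕ} (hp : p.Prime) [Finite G] (hpG : IsPGroup p G)
    {H L : Subgroup G} (hH : H.Normal) (hL : L.Normal) (hHL : H ≤ L) (hne : H ≠ L) :
    ∃ M : Subgroup G, M.Normal ∧ H ≤ M ∧ M ≤ L ∧ M.relIndex L = p := by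
  haveI : Fact p.Prime := ⟨hp⟩
  haveI := hL
  set K := H ⊔ (⁅L, (⊤ : Subgroup G)⁆ ⊔ pPow p L) with hK
  haveI hKn : K.Normal := by
    haveI := hH
    haveI := pPow_normal p L hL
    exact Subgroup.sup_normal _ _
  have hKL : K ≤ L := sup_le hHL (sup_le (commutator_top_le_self hL) (pPow_le p L))
  have hKne : K ≠ L := fun h => hne (frattini_step hp hpG hH hL hHL h)
  have hCmK : ⁅L, (⊤ : Subgroup G)⁆ ≤ K := le_sup_left.trans le_sup_right
  set K' := K.subgroupOf L with hK'
  haveI : K'.Normal := hKn.subgroupOf L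
  have hcardV : Nat.card (L ⧸ K') = K.relIndex L := by
    rw [Subgroup.relIndex, Subgroup.index_eq_card]
  have hpV : IsPGroup p (L ⧸ K') := (hpG.to_subgroup L).to_quotient K'
  obtain ⟨m, hm⟩ := IsPGroup.iff_card.mp hpV
  have hm1 : m ≠ 0 := by
    intro h0
    rw [h0, pow_zero] at hm
    rw [hcardV] at hm
    exact hKne (le_antisymm hKL (Subgroup.relIndex_eq_one.mp hm))
  obtain ⟨m', rfl⟩ := Nat.exists_eq_succ_of_ne_zero hm1
  obtain ⟨W, hW⟩ := Sylow.exists_subgroup_card_pow_prime p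
    (show p ^ m' ∣ Nat.card (L ⧸ K') by rw [hm]; exact pow_dvd_pow p (Nat.le_succ m'))
  have hWidx : W.index = p := by
    have h1 := Subgroup.card_mul_index W
    rw [hW, hm, pow_succ] at h1
    exact Nat.eq_of_mul_eq_mul_left (pow_pos hp.pos m') h1
  set M := (W.comap (QuotientGroup.mk' K')).map L.subtype with hM
  have hKM : K ≤ M := by
    intro x hx
    refine ⟨⟨x, hKL hx⟩, ?_, rfl⟩
    show QuotientGroup.mk' K' ⟨x, hKL hx⟩ ∈ W
    have h1 : QuotientGroup.mk' K' ⟨x, hKL hx⟩ = 1 := by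
      rw [QuotientGroup.mk'_apply, QuotientGroup.eq_one_iff]
      exact Subgroup.mem_subgroupOf.mpr hx
    rw [h1]
    exact W.one_mem
  have hML : M ≤ L := Subgroup.map_subtype_le _
  refine ⟨M, normal_of_commutator_le hML (hCmK.trans hKM), le_sup_left.trans hKM, hML, ?_⟩
  rw [Subgroup.relIndex]
  have h2 : M.subgroupOf L = W.comap (QuotientGroup.mk' K') :=
    Subgroup.comap_map_eq_self_of_injective (Subgroup.subtype_injective L) _
  rw [h2, Subgroup.index_comap,
    MonoidHom.range_eq_top.mpr (QuotientGroup.mk'_surjective K'), Subgroup.relIndex_top_right,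
    hWidx]

lemma commutator_le_of_relIndex_prime {p : ℕ} (hp : p.Prime) [Finite G] (hpG : IsPGroup p G)
    {M L : Subgroup G} (hM : M.Normal) (hL : L.Normal) (hML : M ≤ L)
    (hrel : M.relIndex L = p) : ⁅L, (⊤ : Subgroup G)⁆ ≤ M := by
  haveI : Fact p.Prime := ⟨hp⟩
  haveI : Group.IsNilpotent G := hpG.isNilpotent
  set N := M ⊔ ⁅L, (⊤ : Subgroup G)⁆ with hN
  have hMN : M ≤ N := le_sup_left
  have hNL : N ≤ L := sup_le hML (commutator_top_le_self hL)
  have hmul : M.relIndex N * N.relIndex L = p := by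
    rw [← hrel]
    exact Subgroup.relIndex_mul_relIndex M N L hMN hNL
  have hdvd : N.relIndex L ∣ p := Dvd.intro_left _ hmul
  rcases (Nat.dvd_prime hp).mp hdvd with h1 | hp'
  · exfalso
    have hNL' : N = L := le_antisymm hNL (Subgroup.relIndex_eq_one.mp h1)
    have hMLeq := sup_commutator_self ‹Group.IsNilpotent G› hM hNL'
    rw [hMLeq, Subgroup.relIndex_self] at hrel
    exact hp.ne_one hrel.symm
  · have h1 : M.relIndex N = 1 := by
      rw [hp'] at hmul
      exact Nat.eq_of_mul_eq_mul_right hp.pos (hmul.trans (one_mul p).symm)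
    exact le_sup_right.trans (Subgroup.relIndex_eq_one.mp h1)

lemma pow_mem_of_relIndex_p {p : ℕ} {M L : Subgroup G} (hM : M.Normal) (hML : M ≤ L)
    (hrel : M.relIndex L = p) {x : G} (hx : x ∈ L) : x ^ p ∈ M := by
  haveI := hM
  have hcard : Nat.card (L ⧸ M.subgroupOf L) = p := by
    rw [← Subgroup.index_eq_card]; exact hrel
  have h2 : QuotientGroup.mk' (M.subgroupOf L) ((⟨x, hx⟩ : L) ^ p) = 1 := by
    rw [map_pow, ← hcard]
    exact pow_card_eq_one'
  have h3 := MonoidHom.mem_ker.mpr h2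
  rw [QuotientGroup.ker_mk'] at h3
  have h4 := Subgroup.mem_subgroupOf.mp h3
  simpa using h4

lemma card_index_p_le {p : ℕ} (hp : p.Prime) {V : Type*} [CommGroup V] [Finite V]
    (T : Finset V) (hT : Subgroup.closure (↑T : Set V) = ⊤) :
    {U : Subgroup V | U.index = p}.ncard ≤ p ^ T.card - 1 := by
  haveI : Fact p.Prime := ⟨hp⟩
  classical
  have hex : ∀ U : Subgroup V, U.index = p →
      ∃ φ : V →* Multiplicative (ZMod p), φ.ker = U := by
    intro U hU
    have hcardQ : Nat.card (V ⧸ U) = p := by rw [← Subgroup.index_eq_card]; exact hU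
    have hcardZ : Nat.card (Multiplicative (ZMod p)) = p := by
      rw [Nat.card_congr Multiplicative.toAdd, Nat.card_zmod]
    let e : (V ⧸ U) ≃* Multiplicative (ZMod p) := mulEquivOfPrimeCardEq hcardQ hcardZ
    refine ⟨e.toMonoidHom.comp (QuotientGroup.mk' U), ?_⟩
    ext x
    rw [MonoidHom.mem_ker, MonoidHom.comp_apply,
      show e.toMonoidHom (QuotientGroup.mk' U x) = e (QuotientGroup.mk' U x) from rfl,
      MulEquiv.map_eq_one_iff, ← MonoidHom.mem_ker, QuotientGroup.ker_mk']
  set Ψ : Subgroup V → ({x : V // x ∈ T} → Multiplicative (ZMod p)) :=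
    fun U => if h : U.index = p then (fun t => (hex U h).choose t.1) else (fun _ => 1) with hΨ
  have hval : ∀ (U : Subgroup V) (h : U.index = p) (t : T), Ψ U t = (hex U h).choose t.1 := by
    intro U h t
    simp only [hΨ, dif_pos h]
  have hinj : Set.InjOn Ψ {U : Subgroup V | U.index = p} := by
    intro U1 h1 U2 h2 heq
    simp only [Set.mem_setOf_eq] at h1 h2
    have e1 := (hex U1 h1).choose_spec
    have e2 := (hex U2 h2).choose_spec
    have hfeq : (hex U1 h1).choose = (hex U2 h2).choose := by
      apply MonoidHom.eq_of_eqOn_dense hT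
      intro t ht
      have := congrFun heq ⟨t, ht⟩
      rwa [hval U1 h1, hval U2 h2] at this
    rw [← e1, ← e2, hfeq]
  have hsub : Ψ '' {U : Subgroup V | U.index = p} ⊆
      {f : {x : V // x ∈ T} → Multiplicative (ZMod p) | f ≠ fun _ => 1} := by
    rintro _ ⟨U, hU, rfl⟩
    simp only [Set.mem_setOf_eq] at hU ⊢
    intro hcontra
    have e1 := (hex U hU).choose_spec
    have hφ1 : (hex U hU).choose = (1 : V →* Multiplicative (ZMod p)) := by
      apply MonoidHom.eq_of_eqOn_dense hT
      intro t ht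
      have := congrFun hcontra ⟨t, ht⟩
      rw [hval U hU] at this
      simpa using this
    rw [hφ1] at e1
    have hUtop : U = ⊤ := by rw [← e1]; ext x; simp [MonoidHom.mem_ker]
    rw [hUtop, Subgroup.index_top] at hU
    exact hp.ne_one hU.symm
  have hfin : ({f : {x : V // x ∈ T} → Multiplicative (ZMod p) | f ≠ fun _ => 1}).ncard =
      p ^ T.card - 1 := by
    have h1 : {f : {x : V // x ∈ T} → Multiplicative (ZMod p) | f ≠ fun _ => 1} =
        Set.univ \ {fun _ => 1} := by
      ext f; simp
    rw [h1, Set.ncard_diff (by simp) (Set.toFinite _), Set.ncard_univ, Set.ncard_singleton,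
      Nat.card_fun]
    congr 2
    · rw [Nat.card_congr Multiplicative.toAdd, Nat.card_zmod]
    · rw [Nat.card_eq_fintype_card, Fintype.card_coe]
  calc {U : Subgroup V | U.index = p}.ncard
      = (Ψ '' {U : Subgroup V | U.index = p}).ncard := (Set.ncard_image_of_injOn hinj).symm
    _ ≤ ({f : {x : V // x ∈ T} → Multiplicative (ZMod p) | f ≠ fun _ => 1}).ncard :=
        Set.ncard_le_ncard hsub (Set.toFinite _)
    _ = p ^ T.card - 1 := hfin

lemma card_relIndex_p_le {p : ℕ} (hp : p.Prime) [Finite G] (hpG : IsPGroup p G)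
    {L : Subgroup G} (hL : L.Normal) {d : ℕ} (S : Finset G) (hS : (↑S : Set G) ⊆ L)
    (hSd : S.card ≤ d) (hScl : Subgroup.normalClosure (↑S : Set G) = L) :
    {M : Subgroup G | M.Normal ∧ M ≤ L ∧ M.relIndex L = p}.ncard ≤ p ^ d - 1 := by
  classical
  haveI := hL
  set K₀ : Subgroup G := ⁅L, (⊤ : Subgroup G)⁆ ⊔ pPow p L with hK₀
  have hK₀L : K₀ ≤ L := sup_le (commutator_top_le_self hL) (pPow_le p L)
  have hK₀M : ∀ M ∈ {M : Subgroup G | M.Normal ∧ M ≤ L ∧ M.relIndex L = p}, K₀ ≤ M := by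
    rintro M ⟨hM, hML, hrel⟩
    refine sup_le (commutator_le_of_relIndex_prime hp hpG hM hL hML hrel) ?_
    rw [pPow, Subgroup.closure_le]
    rintro x ⟨y, hy, rfl⟩
    exact pow_mem_of_relIndex_p hM hML hrel hy
  haveI : K₀.Normal := by
    haveI := pPow_normal p L hL
    exact Subgroup.sup_normal _ _
  set K' := K₀.subgroupOf L with hK'
  haveI : K'.Normal := Subgroup.Normal.subgroupOf ‹K₀.Normal› L
  have hcomm : ∀ a b : L ⧸ K', a * b = b * a := by
    intro a b
    induction a using QuotientGroup.induction_on
    induction b using QuotientGroup.induction_on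
    rename_i x y
    show ((x : L ⧸ K')) * (y : L ⧸ K') = (y : L ⧸ K') * (x : L ⧸ K')
    rw [← QuotientGroup.mk_mul, ← QuotientGroup.mk_mul, QuotientGroup.eq]
    rw [Subgroup.mem_subgroupOf]
    have hcoe : (((x * y)⁻¹ * (y * x) : L) : G) = ⁅((y : G))⁻¹, ((x : G))⁻¹⁆ := by
      push_cast
      group
    rw [hcoe]
    have hsl : ⁅L, (⊤ : Subgroup G)⁆ ≤ K₀ := le_sup_left
    exact hsl (Subgroup.commutator_mem_commutator (L.inv_mem y.2) (Subgroup.mem_top _))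
  letI : CommGroup (L ⧸ K') :=
    { (inferInstance : Group (L ⧸ K')) with mul_comm := hcomm }
  set T : Finset (L ⧸ K') := S.attach.image
    (fun s => ((⟨s.1, hS s.2⟩ : L) : L ⧸ K')) with hTdef
  have hTcard : T.card ≤ d :=
    le_trans Finset.card_image_le (by rw [Finset.card_attach]; exact hSd)
  have hTgen : Subgroup.closure (↑T : Set (L ⧸ K')) = ⊤ := by
    set X : Subgroup L := (Subgroup.closure (↑T : Set (L ⧸ K'))).comap
      (QuotientGroup.mk' K') with hX
    set X' : Subgroup G := X.map L.subtype with hX'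
    have hK₀X' : K₀ ≤ X' := by
      intro x hx
      refine ⟨⟨x, hK₀L hx⟩, ?_, rfl⟩
      show QuotientGroup.mk' K' ⟨x, hK₀L hx⟩ ∈ Subgroup.closure (↑T : Set (L ⧸ K'))
      have h1 : QuotientGroup.mk' K' ⟨x, hK₀L hx⟩ = 1 := by
        rw [QuotientGroup.mk'_apply, QuotientGroup.eq_one_iff]
        exact Subgroup.mem_subgroupOf.mpr hx
      rw [h1]
      exact Subgroup.one_mem _
    have hSX' : (↑S : Set G) ⊆ X' := by
      intro a ha
      refine ⟨⟨a, hS ha⟩, ?_, rfl⟩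
      show QuotientGroup.mk' K' ⟨a, hS ha⟩ ∈ Subgroup.closure (↑T : Set (L ⧸ K'))
      apply Subgroup.subset_closure
      rw [hTdef, Finset.coe_image]
      exact ⟨⟨a, ha⟩, by simp, rfl⟩
    have hCmX' : ⁅(⊤ : Subgroup G), L⁆ ≤ X' := by
      rw [Subgroup.commutator_comm]
      exact le_sup_left.trans hK₀X'
    have hLX' : L ≤ X' := by
      rw [← hScl]
      unfold Subgroup.normalClosure
      rw [Subgroup.closure_le]
      intro c hc
      obtain ⟨a, ha, hconj⟩ := Group.mem_conjugatesOfSet_iff.mp hc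
      obtain ⟨g, rfl⟩ := isConj_iff.mp hconj
      have h1 : g * a * g⁻¹ = ⁅g, a⁆ * a := by group
      rw [SetLike.mem_coe, h1]
      exact X'.mul_mem
        (hCmX' (Subgroup.commutator_mem_commutator (Subgroup.mem_top g) (hS ha)))
        (hSX' ha)
    rw [eq_top_iff]
    intro v _
    induction v using QuotientGroup.induction_on with
    | H z =>
    obtain ⟨w, hw, hwz⟩ := hLX' z.2
    have hwz' : w = z := Subtype.ext hwz
    rw [← hwz']
    exact hw
  set Φ : Subgroup G → Subgroup (L ⧸ K') :=
    fun M => (M.subgroupOf L).map (QuotientGroup.mk' K') with hΦ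
  have hker : (QuotientGroup.mk' K').ker = K' := QuotientGroup.ker_mk' K'
  have hΦidx : ∀ M ∈ {M : Subgroup G | M.Normal ∧ M ≤ L ∧ M.relIndex L = p},
      (Φ M).index = p := by
    intro M hM
    have hc : K' ≤ M.subgroupOf L := fun y hy =>
      Subgroup.mem_subgroupOf.mpr (hK₀M M hM (Subgroup.mem_subgroupOf.mp hy))
    show ((M.subgroupOf L).map (QuotientGroup.mk' K')).index = p
    rw [Subgroup.index_map, hker, sup_of_le_left hc,
      MonoidHom.range_eq_top.mpr (QuotientGroup.mk'_surjective K'), Subgroup.index_top, mul_one]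
    exact hM.2.2
  have hΦinj : Set.InjOn Φ {M : Subgroup G | M.Normal ∧ M ≤ L ∧ M.relIndex L = p} := by
    intro M1 h1 M2 h2 heq
    have hc1 : K' ≤ M1.subgroupOf L := fun y hy =>
      Subgroup.mem_subgroupOf.mpr (hK₀M M1 h1 (Subgroup.mem_subgroupOf.mp hy))
    have hc2 : K' ≤ M2.subgroupOf L := fun y hy =>
      Subgroup.mem_subgroupOf.mpr (hK₀M M2 h2 (Subgroup.mem_subgroupOf.mp hy))
    have e1 : M1.subgroupOf L = M2.subgroupOf L := by
      have h3 := congrArg (Subgroup.comap (QuotientGroup.mk' K')) heq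
      rwa [hΦ, Subgroup.comap_map_eq, Subgroup.comap_map_eq, hker,
        sup_of_le_left hc1, sup_of_le_left hc2] at h3
    have h4 := congrArg (Subgroup.map L.subtype) e1
    rwa [Subgroup.subgroupOf_map_subtype, Subgroup.subgroupOf_map_subtype,
      inf_of_le_left h1.2.1, inf_of_le_left h2.2.1] at h4
  haveI : Finite (Subgroup (L ⧸ K')) :=
    Finite.of_injective (fun H => (H : Set (L ⧸ K'))) SetLike.coe_injective
  calc {M : Subgroup G | M.Normal ∧ M ≤ L ∧ M.relIndex L = p}.ncard
      = (Φ '' {M : Subgroup G | M.Normal ∧ M ≤ L ∧ M.relIndex L = p}).ncard :=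
        (Set.ncard_image_of_injOn hΦinj).symm
    _ ≤ {U : Subgroup (L ⧸ K') | U.index = p}.ncard :=
        Set.ncard_le_ncard (by rintro _ ⟨M, hM, rfl⟩; exact hΦidx M hM) (Set.toFinite _)
    _ ≤ p ^ T.card - 1 := card_index_p_le hp T hTgen
    _ ≤ p ^ d - 1 := Nat.sub_le_sub_right (Nat.pow_le_pow_right hp.pos hTcard) 1

lemma ncard_biUnion_le {α β : Type*} [Finite α] [Finite β] (s : Set α) (f : α → Set β) (n : ℕ)
    (h : ∀ a ∈ s, (f a).ncard ≤ n) : (⋃ a ∈ s, f a).ncard ≤ s.ncard * n := by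
  classical
  refine Set.Finite.induction_on
    (motive := fun s _ => (∀ a ∈ s, (f a).ncard ≤ n) → (⋃ a ∈ s, f a).ncard ≤ s.ncard * n)
    s (Set.toFinite s) (by simp) ?_ h
  intro a s ha hs ih h
  rw [Set.biUnion_insert]
  refine le_trans (Set.ncard_union_le _ _) ?_
  rw [Set.ncard_insert_of_notMem ha (Set.toFinite s)]
  have h1 := h a (Set.mem_insert a s)
  have h2 := ih (fun b hb => h b (Set.mem_insert_of_mem a hb))
  calc (f a).ncard + (⋃ b ∈ s, f b).ncard ≤ n + s.ncard * n := Nat.add_le_add h1 h2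
    _ = (s.ncard + 1) * n := by ring

lemma main_aux {p : ℕ} (hp : p.Prime) [Finite G] (hpG : IsPGroup p G) (d : ℕ) :
    ∀ k : ℕ, 1 ≤ k → ∀ L : Subgroup G, L.Normal →
      (∀ H : Subgroup G, H.Normal → H ≤ L → dGen H ≤ d) →
      {H : Subgroup G | H.Normal ∧ H ≤ L ∧ H.relIndex L ≤ k}.ncard ≤ k ^ d := by
  intro k
  induction k using Nat.strong_induction_on with
  | _ k IH =>
  intro hk L hL hd
  haveI : Fact p.Prime := ⟨hp⟩
  haveI := hL
  classical
  haveI : Finite (Subgroup G) :=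
    Finite.of_injective (fun H => (H : Set G)) SetLike.coe_injective
  have hppow : ∀ H : Subgroup G, H ≤ L → ∃ m, H.relIndex L = p ^ m := by
    intro H hHL
    have h1 : H.relIndex L ∣ Nat.card L := by
      show (H.subgroupOf L).index ∣ Nat.card L
      exact Subgroup.index_dvd_card _
    obtain ⟨n, hn⟩ := IsPGroup.iff_card.mp (hpG.to_subgroup L)
    rw [hn] at h1
    obtain ⟨m, _, hm⟩ := (Nat.dvd_prime_pow hp).mp h1
    exact ⟨m, hm⟩
  by_cases hkp : k < p
  · have hsub : {H : Subgroup G | H.Normal ∧ H ≤ L ∧ H.relIndex L ≤ k} ⊆ {L} := by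
      rintro H ⟨hH, hHL, hHk⟩
      obtain ⟨m, hm⟩ := hppow H hHL
      have hm0 : m = 0 := by
        by_contra hm0
        have h2 : p ≤ p ^ m := Nat.le_self_pow hm0 p
        omega
      rw [hm0, pow_zero] at hm
      exact le_antisymm hHL (Subgroup.relIndex_eq_one.mp hm)
    calc {H : Subgroup G | H.Normal ∧ H ≤ L ∧ H.relIndex L ≤ k}.ncard
        ≤ ({L} : Set (Subgroup G)).ncard := Set.ncard_le_ncard hsub (Set.toFinite _)
      _ = 1 := Set.ncard_singleton L
      _ ≤ k ^ d := Nat.one_le_pow d k hk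
  · push_neg at hkp
    set q := k / p with hq
    have hq1 : 1 ≤ q := (Nat.one_le_div_iff hp.pos).mpr hkp
    have hqk : q < k := Nat.div_lt_self (by omega) hp.one_lt
    have hLgen : ∃ S : Finset G, (↑S : Set G) ⊆ L ∧ S.card ≤ d ∧
        Subgroup.normalClosure (↑S : Set G) = L := by
      have hne : {n : ℕ | ∃ S : Finset G, (↑S : Set G) ⊆ (L : Set G) ∧ S.card = n ∧
          Subgroup.normalClosure (↑S : Set G) = L}.Nonempty := by
        refine ⟨_, (L : Set G).toFinite.toFinset, ?_, rfl, ?_⟩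
        · rw [Set.Finite.coe_toFinset]
        · rw [Set.Finite.coe_toFinset]
          exact Subgroup.normalClosure_eq_self L
      obtain ⟨S, hS1, hS2, hS3⟩ := Nat.sInf_mem hne
      exact ⟨S, hS1, le_trans (le_of_eq hS2) (hd L hL le_rfl), hS3⟩
    obtain ⟨S, hS1, hSd, hScl⟩ := hLgen
    set 𝓜 := {M : Subgroup G | M.Normal ∧ M ≤ L ∧ M.relIndex L = p} with h𝓜
    have h𝓜card : 𝓜.ncard ≤ p ^ d - 1 := card_relIndex_p_le hp hpG hL S hS1 hSd hScl
    have hcover : {H : Subgroup G | H.Normal ∧ H ≤ L ∧ H.relIndex L ≤ k} ⊆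
        {L} ∪ ⋃ M ∈ 𝓜, {H : Subgroup G | H.Normal ∧ H ≤ M ∧ H.relIndex M ≤ q} := by
      rintro H ⟨hH, hHL, hHk⟩
      by_cases hHL' : H = L
      · exact Or.inl hHL'
      · right
        obtain ⟨M, hM, hHM, hML, hrel⟩ := exists_relIndex_p hp hpG hH hL hHL hHL'
        refine Set.mem_biUnion ⟨hM, hML, hrel⟩ ⟨hH, hHM, ?_⟩
        have hmul : H.relIndex M * M.relIndex L = H.relIndex L :=
          Subgroup.relIndex_mul_relIndex H M L hHM hML
        rw [hrel] at hmul
        rw [hq, Nat.le_div_iff_mul_le hp.pos]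
        exact le_trans (le_of_eq hmul) hHk
    have h1 : ∀ M ∈ 𝓜, {H : Subgroup G | H.Normal ∧ H ≤ M ∧ H.relIndex M ≤ q}.ncard ≤ q ^ d := by
      rintro M ⟨hM, hML, _⟩
      exact IH q hqk hq1 M hM (fun H ha hb => hd H ha (hb.trans hML))
    have hpq : p * q ≤ k := by
      rw [hq, mul_comm]
      exact Nat.div_mul_le_self k p
    have h2 : (p ^ d - 1) * q ^ d = p ^ d * q ^ d - q ^ d := by
      rw [Nat.sub_mul, one_mul]
    have h3 : p ^ d * q ^ d ≤ k ^ d := by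
      rw [← mul_pow]
      exact Nat.pow_le_pow_left hpq d
    have h4 : 1 ≤ q ^ d := Nat.one_le_pow d q hq1
    have h5 : 1 ≤ k ^ d := Nat.one_le_pow d k (by omega)
    have h6 : q ^ d ≤ p ^ d * q ^ d := Nat.le_mul_of_pos_left _ (pow_pos hp.pos d)
    calc {H : Subgroup G | H.Normal ∧ H ≤ L ∧ H.relIndex L ≤ k}.ncard
        ≤ ({L} ∪ ⋃ M ∈ 𝓜, {H : Subgroup G | H.Normal ∧ H ≤ M ∧ H.relIndex M ≤ q}).ncard :=
          Set.ncard_le_ncard hcover (Set.toFinite _)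
      _ ≤ ({L} : Set (Subgroup G)).ncard +
          (⋃ M ∈ 𝓜, {H : Subgroup G | H.Normal ∧ H ≤ M ∧ H.relIndex M ≤ q}).ncard :=
          Set.ncard_union_le _ _
      _ ≤ 1 + 𝓜.ncard * q ^ d := by
          rw [Set.ncard_singleton]
          exact Nat.add_le_add_left (ncard_biUnion_le 𝓜 _ (q ^ d) h1) 1
      _ ≤ 1 + (p ^ d - 1) * q ^ d :=
          Nat.add_le_add_left (Nat.mul_le_mul_right _ h𝓜card) 1
      _ ≤ k ^ d := by omega

end CountNormalAux

/-- **Lemma (counting `G`-normal subgroups of bounded index).** Let `G` be a finite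
`p`-group, `L ⊴ G`, and let `d` bound `d_G(H)` over all normal subgroups `H ≤ L` of `G`.
Then for all `k ≥ 1` there are at most `k^d` normal subgroups `H ≤ L` of `G` with
`|L : H| ≤ k`. -/
theorem count_normal_subgroups_of_bounded_index (p : ℕ) (hp : p.Prime)
    (G : Type) [Group G] [Finite G] (hpG : IsPGroup p G)
    (L : Subgroup G) (hL : L.Normal)
    (d : ℕ) (hd : ∀ H : Subgroup G, H.Normal → H ≤ L → dGen H ≤ d)
    (k : ℕ) (hk : 1 ≤ k) :
    {H : Subgroup G | H.Normal ∧ H ≤ L ∧ H.relIndex L ≤ k}.ncard ≤ k ^ d := by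
  exact CountNormalAux.main_aux hp hpG d k hk L hL hd
end

section
/- Let G be a finite group and let V be a completely reducible (semisimple) module for G over an arbitrary field F. Write V = W₁^{δ₁} ⊕ ⋯ ⊕ W_e^{δ_e}, where W₁, …, W_e are pairwise non-isomorphic irreducible F[G]-modules and δ_i is the multiplicity of W_i. Then V can be generated as an F[G]-module by δ := max{δ_i : 1 ≤ i ≤ e} elements, i.e. there exist v₁, …, v_δ ∈ V whose generated F[G]-submodule is all of V. -/
open DirectSum

/-- **Lemma (generating completely reducible modules).** Let `G` be a finite group and
`V` a completely reducible `F[G]`-module, say `V ≅ W₁^{δ₁} ⊕ ⋯ ⊕ W_e^{δ_e}` with the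
`Wᵢ` pairwise non-isomorphic irreducible `F[G]`-modules.  Then `V` can be generated as
an `F[G]`-module by `δ := max δᵢ` elements. -/
theorem generation_of_semisimple_module (F : Type) [Field F]
    (G : Type) [Group G] [Finite G]
    (V : Type) [AddCommGroup V] [Module (MonoidAlgebra F G) V]
    (e : ℕ) (δ : Fin e → ℕ)
    (W : Fin e → Type) [∀ i, AddCommGroup (W i)]
    [∀ i, Module (MonoidAlgebra F G) (W i)]
    (hsimple : ∀ i, IsSimpleModule (MonoidAlgebra F G) (W i))
    (hnoniso : ∀ i j, i ≠ j → IsEmpty (W i ≃ₗ[MonoidAlgebra F G] W j))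
    (hdecomp : Nonempty (V ≃ₗ[MonoidAlgebra F G] ⨁ i, (Fin (δ i) → W i))) :
    ∃ v : Fin (Finset.univ.sup δ) → V,
      Submodule.span (MonoidAlgebra F G) (Set.range v) = ⊤ := by
  classical
  set R := MonoidAlgebra F G
  set D := ⨁ i, (Fin (δ i) → W i) with hD
  obtain ⟨eqv⟩ := hdecomp
  haveI : ∀ i, IsSimpleModule R (W i) := hsimple
  -- inclusion of a slot
  let ι : ∀ (i : Fin e), Fin (δ i) → (W i →ₗ[R] D) := fun i j =>
    (lof R (Fin e) (fun i => Fin (δ i) → W i) i) ∘ₗ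
      (LinearMap.single R (fun _ : Fin (δ i) => W i) j)
  -- nonzero elements of each simple module
  have hw : ∀ i, ∃ w : W i, w ≠ 0 := fun i =>
    haveI := IsSimpleModule.nontrivial R (W i); exists_ne 0
  choose w hw0 using hw
  -- generators in D
  let u : Fin (Finset.univ.sup δ) → D := fun k =>
    ∑ i : Fin e, ∑ j : Fin (δ i), if (j : ℕ) = (k : ℕ) then ι i j (w i) else 0
  -- D is semisimple
  haveI : IsSemisimpleModule R D := by
    refine isSemisimpleModule_of_isSemisimpleModule_submodule'
      (p := fun p : Σ i : Fin e, Fin (δ i) => LinearMap.range (ι p.1 p.2)) ?_ ?_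
    · exact fun p => IsSemisimpleModule.range _
    · rw [eq_top_iff]
      rintro x -
      induction x using DirectSum.induction_on with
      | zero => exact zero_mem _
      | of i y =>
        have hy : y = ∑ j : Fin (δ i), Pi.single j (y j) := by
          rw [Finset.univ_sum_single]
        rw [show (of (fun i => Fin (δ i) → W i) i y : D) = lof R _ _ i y from rfl, hy,
          map_sum]
        refine Submodule.sum_mem _ fun j _ => ?_
        exact Submodule.mem_iSup_of_mem ⟨i, j⟩ ⟨y j, rfl⟩
      | add a b ha hb => exact add_mem ha hb
  haveI : IsAtomic (Submodule R D) := isAtomic_of_complementedLattice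
  haveI : IsCoatomic (Submodule R D) :=
    isCoatomic_of_isAtomic_of_complementedLattice_of_isModular
  -- span of u is everything
  have hspan : Submodule.span R (Set.range u) = ⊤ := by
    by_contra hne
    obtain ⟨M, hM, hle⟩ :=
      (eq_top_or_exists_le_coatom (Submodule.span R (Set.range u))).resolve_left hne
    haveI hQ : IsSimpleModule R (D ⧸ M) := isSimpleModule_iff_isCoatom.mpr hM
    let g : ∀ (i : Fin e), Fin (δ i) → (W i →ₗ[R] D ⧸ M) := fun i j => M.mkQ ∘ₗ ι i j
    -- some g i j is nonzero
    have hex : ∃ i : Fin e, ∃ j : Fin (δ i), g i j ≠ 0 := by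
      by_contra hall
      push_neg at hall
      have htop : M = ⊤ := by
        rw [eq_top_iff]
        rintro x -
        induction x using DirectSum.induction_on with
        | zero => exact zero_mem _
        | of i y =>
          have hy : y = ∑ j : Fin (δ i), Pi.single j (y j) := by
            rw [Finset.univ_sum_single]
          rw [show (of (fun i => Fin (δ i) → W i) i y : D) = lof R _ _ i y from rfl, hy,
            map_sum]
          refine Submodule.sum_mem _ fun j _ => ?_
          have : ι i j (y j) ∈ M := by
            rw [← Submodule.Quotient.mk_eq_zero]
            have := congrFun (congrArg DFunLike.coe (hall i j)) (y j)
            simpa [g] using this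
          exact this
        | add a b ha hb => exact add_mem ha hb
      exact hM.1 htop
    obtain ⟨i0, j0, hg0⟩ := hex
    have hbij : Function.Bijective (g i0 j0) :=
      (g i0 j0).bijective_or_eq_zero.resolve_right hg0
    -- other blocks map to zero
    have hzero : ∀ i, i ≠ i0 → ∀ j : Fin (δ i), g i j = 0 := by
      intro i hi j
      by_contra hgij
      have hbij' : Function.Bijective (g i j) :=
        (g i j).bijective_or_eq_zero.resolve_right hgij
      exact (hnoniso i i0 hi).false
        ((LinearEquiv.ofBijective _ hbij').trans (LinearEquiv.ofBijective _ hbij).symm)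
    -- the index k
    have hk : (j0 : ℕ) < Finset.univ.sup δ :=
      lt_of_lt_of_le j0.isLt (Finset.le_sup (Finset.mem_univ i0))
    let k : Fin (Finset.univ.sup δ) := ⟨j0, hk⟩
    have humem : u k ∈ M := hle (Submodule.subset_span ⟨k, rfl⟩)
    have h0 : M.mkQ (u k) = 0 := (Submodule.Quotient.mk_eq_zero M).mpr humem
    have hcalc : M.mkQ (u k) = g i0 j0 (w i0) := by
      show M.mkQ (∑ i : Fin e, ∑ j : Fin (δ i),
          if (j : ℕ) = (k : ℕ) then ι i j (w i) else 0) = _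
      rw [map_sum]
      rw [Finset.sum_eq_single i0]
      · rw [map_sum]
        have : ∀ j : Fin (δ i0),
            M.mkQ (if (j : ℕ) = (k : ℕ) then ι i0 j (w i0) else 0)
              = if j = j0 then g i0 j0 (w i0) else 0 := by
          intro j
          have hiff : ((j : ℕ) = (k : ℕ)) ↔ j = j0 := by
            constructor
            · intro h; exact Fin.ext h
            · intro h; subst h; rfl
          by_cases h : j = j0
          · simp [hiff, h, g]; rw [if_pos rfl]
          · simp [hiff, h]
        rw [Finset.sum_congr rfl fun j _ => this j, Finset.sum_ite_eq' Finset.univ j0]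
        simp
      · intro i _ hi
        rw [map_sum]
        refine Finset.sum_eq_zero fun j _ => ?_
        by_cases h : (j : ℕ) = (k : ℕ)
        · have : M.mkQ (ι i j (w i)) = g i j (w i) := rfl
          rw [if_pos h, this, hzero i hi j]; rfl
        · rw [if_neg h, map_zero]
      · intro h; exact absurd (Finset.mem_univ i0) h
    rw [hcalc] at h0
    exact hw0 i0 (hbij.injective (by rw [h0, map_zero]))
  -- transfer back to V
  refine ⟨fun k => eqv.symm (u k), ?_⟩
  have hrg : Set.range (fun k => eqv.symm (u k)) = eqv.symm '' Set.range u := by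
    rw [← Set.range_comp]; rfl
  rw [hrg, ← LinearEquiv.coe_coe, ← Submodule.map_span, hspan, Submodule.map_top,
    LinearEquiv.range]
end
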